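/- arXiv:1503.08892 — 3 statements merged into one kernel-verified Lean document; each statement's English description precedes it below -/
import Mathlib

section
/- For every real number x, x · [(2/π)∫_{{ξ∈ℂ : |ξ|² > x²/2}} e^{-π|ξ|²}(2|ξ|² - x²) dA(ξ)] · e^{-πx²} = (4x/π²) e^{-3πx²/2}. In other words, the limit expected density of saddle critical values on a Riemann surface equals D^{1,1}_∞(x) = (4x/π²) e^{-3πx²/2}. -/
/-! In polar coordinates the integral over `{‖ξ‖ > s}`, `s = |x|/√2`, becomes
`2π ∫_s^∞ r e^{-πr²} (2r² - 2s²) dr`, and `r e^{-ar²} (2r² - 2s²)` has the elementary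
antiderivative `-e^{-ar²} (a(r² - s²) + 1) / a²`, so the integral equals `2π · e^{-πs²} / π²`. -/

open MeasureTheory Real

open Metric Set in
theorem MeasureTheory.setIntegral_fun_norm_gt_addHaar {E F : Type*} [NormedAddCommGroup E]
    [NormedSpace ℝ E] [Nontrivial E] [FiniteDimensional ℝ E] [MeasurableSpace E] [BorelSpace E]
    [NormedAddCommGroup F] [NormedSpace ℝ F] (μ : Measure E) [μ.IsAddHaarMeasure]
    (f : ℝ → F) {r : ℝ} (hr : 0 ≤ r) :
    ∫ x in {x : E | r < ‖x‖}, f ‖x‖ ∂μ =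
      Module.finrank ℝ E • μ.real (ball 0 1) •
        ∫ y in Ioi r, y ^ (Module.finrank ℝ E - 1) • f y := by
  have hindicator : ∀ y : ℝ, y ^ (Module.finrank ℝ E - 1) • (Ioi r).indicator f y =
      (Ioi r).indicator (fun y ↦ y ^ (Module.finrank ℝ E - 1) • f y) y := by
    intro y
    by_cases hy : y ∈ Ioi r <;> simp [hy]
  rw [← integral_indicator (measurableSet_lt measurable_const measurable_norm)]
  change ∫ x, (Ioi r).indicator f ‖x‖ ∂μ = _
  rw [integral_fun_norm_addHaar, funext hindicator, setIntegral_indicator measurableSet_Ioi,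
    Ioi_inter_Ioi, max_eq_right hr]

open Filter Topology in
theorem integral_Ioi_mul_exp_neg_mul_sq_mul_sub {a s : ℝ} (ha : 0 < a) (hs : 0 ≤ s) :
    ∫ y in Set.Ioi s, y * (exp (-a * y ^ 2) * (2 * y ^ 2 - 2 * s ^ 2)) =
      exp (-a * s ^ 2) / a ^ 2 := by
  set F : ℝ → ℝ := fun y ↦ -(exp (-a * y ^ 2) * (a * (y ^ 2 - s ^ 2) + 1)) / a ^ 2
  have hderiv : ∀ y, HasDerivAt F (y * (exp (-a * y ^ 2) * (2 * y ^ 2 - 2 * s ^ 2))) y := by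
    intro y
    have hgauss :
        HasDerivAt (fun y ↦ exp (-a * y ^ 2)) (exp (-a * y ^ 2) * (-a * (2 * y))) y := by
      simpa using ((hasDerivAt_pow 2 y).const_mul (-a)).exp
    have hpoly : HasDerivAt (fun y ↦ a * (y ^ 2 - s ^ 2) + 1) (a * (2 * y)) y := by
      simpa using (((hasDerivAt_pow 2 y).sub_const (s ^ 2)).const_mul a).add_const 1
    refine ((hgauss.mul hpoly).neg.div_const (a ^ 2)).congr_deriv ?_
    field_simp
    ring
  have hnonneg : ∀ y ∈ Set.Ioi s, 0 ≤ y * (exp (-a * y ^ 2) * (2 * y ^ 2 - 2 * s ^ 2)) := by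
    intro y hy
    have hsy : s ^ 2 < y ^ 2 := pow_lt_pow_left₀ hy hs two_ne_zero
    have hy0 : 0 ≤ y := hs.trans hy.le
    have hdiff : 0 ≤ 2 * y ^ 2 - 2 * s ^ 2 := by linarith
    positivity
  have hlim : Tendsto F atTop (𝓝 0) := by
    have hquad : Tendsto (fun y : ℝ ↦ a * y ^ 2) atTop atTop :=
      (tendsto_pow_atTop two_ne_zero).const_mul_atTop ha
    have hexp : Tendsto (fun t ↦ t * exp (-t) + (1 - a * s ^ 2) * exp (-t)) atTop (𝓝 0) := by
      simpa using (tendsto_pow_mul_exp_neg_atTop_nhds_zero 1).add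
        (tendsto_exp_neg_atTop_nhds_zero.const_mul (1 - a * s ^ 2))
    convert (hexp.comp hquad).neg.div_const (a ^ 2) using 1
    · ext y
      simp only [F, Function.comp_apply, neg_mul]
      ring
    · simp
  rw [integral_Ioi_of_hasDerivAt_of_nonneg' (fun y _ ↦ hderiv y) hnonneg hlim]
  simp only [F, sub_self, mul_zero, zero_add, mul_one]
  ring

theorem saddle_density (x : ℝ) :
    x * ((2 / π) * ∫ ξ in {ξ : ℂ | ‖ξ‖ ^ 2 > x ^ 2 / 2},
        Real.exp (-π * ‖ξ‖ ^ 2) * (2 * ‖ξ‖ ^ 2 - x ^ 2)) *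
      Real.exp (-π * x ^ 2) =
    (4 * x / π ^ 2) * Real.exp (-3 * π * x ^ 2 / 2) := by
  set s := |x| / √2
  have hs : 0 ≤ s := by positivity
  have hs_sq : x ^ 2 = 2 * s ^ 2 := by
    rw [div_pow, sq_abs, sq_sqrt zero_le_two]; ring
  have hset : {ξ : ℂ | ‖ξ‖ ^ 2 > x ^ 2 / 2} = {ξ : ℂ | s < ‖ξ‖} := by
    ext ξ
    rw [Set.mem_ofPred_eq, Set.mem_ofPred_eq, gt_iff_lt, hs_sq, ← sq_lt_sq₀ hs (norm_nonneg ξ),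
      mul_div_cancel_left₀ _ two_ne_zero]
  have hball : volume.real (Metric.ball (0 : ℂ) 1) = π := by
    simp [Measure.real, Complex.volume_ball]
  rw [hset, hs_sq,
    setIntegral_fun_norm_gt_addHaar volume (fun r ↦ exp (-π * r ^ 2) * (2 * r ^ 2 - 2 * s ^ 2)) hs,
    Complex.finrank_real_complex, hball]
  simp only [Nat.reduceSub, pow_one, smul_eq_mul, nsmul_eq_mul, Nat.cast_ofNat]
  rw [integral_Ioi_mul_exp_neg_mul_sq_mul_sub pi_pos hs]
  have hexp : exp (-π * s ^ 2) * exp (-π * (2 * s ^ 2)) = exp (-3 * π * (2 * s ^ 2) / 2) := by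
    rw [← exp_add]; ring_nf
  rw [← hexp]
  field_simp
  ring
end

section
/- For every real number x, the integral over all of ℂ of e^{-π|ξ|²}·|2|ξ|² - x²|, multiplied by 2/π, equals (2/π)x² - 4/π² + (8/π²)e^{-πx²/2}. That is, (2/π)∫_ℂ e^{-π|ξ|²} |2|ξ|² - x²| dA(ξ) = (2/π)x² - 4/π² + (8/π²)e^{-πx²/2}. (Equivalently, this total absolute-value integral is the sum of the local-maximum and saddle integrands of the paper: the integral splits over the regions |ξ|² < x²/2 and |ξ|² > x²/2.) -/
/-!
In polar coordinates the integral is `2π ∫₀^∞ r e^{-πr²} |2r² - x²| dr`. The integrand without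
the absolute value has the explicit primitive `G r = e^{-πr²} (x²/(2π) - r²/π - 1/π²)`, which
tends to `0` at infinity, and it changes sign exactly once, at `c = |x|/√2`. Hence the radial
integral is `(G 0 - G c) + (0 - G c)`, and `G c = -e^{-πx²/2}/π²`.
-/

open MeasureTheory Real Set Filter Topology

theorem Complex.integral_fun_norm {E : Type*} [NormedAddCommGroup E] [NormedSpace ℝ E]
    (g : ℝ → E) : ∫ ξ : ℂ, g ‖ξ‖ = (2 * π) • ∫ r in Ioi (0 : ℝ), r • g r := by
  have hball : volume.real (Metric.ball (0 : ℂ) 1) = π := by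
    simp [measureReal_def, Complex.volume_ball, NNReal.coe_real_pi]
  rw [integral_fun_norm_addHaar volume g, hball, Complex.finrank_real_complex]
  simp [← smul_assoc]

theorem integral_Ioi_abs_of_hasDerivAt_of_sign_change {G g : ℝ → ℝ} {a c L : ℝ} (hac : a ≤ c)
    (hG : ∀ r ∈ Ici a, HasDerivAt G (g r) r) (hg : IntegrableOn g (Ioi a))
    (hneg : ∀ r ∈ Ioc a c, g r ≤ 0) (hpos : ∀ r ∈ Ioi c, 0 ≤ g r)
    (hlim : Tendsto G atTop (𝓝 L)) :
    ∫ r in Ioi a, |g r| = G a - 2 * G c + L := by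
  have hg_c : IntegrableOn g (Ioi c) := hg.mono_set (Ioi_subset_Ioi hac)
  have h_left : ∫ r in Ioc a c, |g r| = G a - G c := by
    rw [setIntegral_congr_fun measurableSet_Ioc fun r hr ↦ abs_of_nonpos (hneg r hr),
      ← intervalIntegral.integral_of_le hac, intervalIntegral.integral_neg,
      intervalIntegral.integral_eq_sub_of_hasDerivAt
        (fun r hr ↦ hG r (uIcc_of_le hac ▸ hr).1)
        ((intervalIntegrable_iff_integrableOn_Ioc_of_le hac).mpr
          (hg.mono_set Ioc_subset_Ioi_self))]
    ring
  have h_right : ∫ r in Ioi c, |g r| = L - G c := by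
    rw [setIntegral_congr_fun measurableSet_Ioi fun r hr ↦ abs_of_nonneg (hpos r hr)]
    exact integral_Ioi_of_hasDerivAt_of_tendsto' (fun r hr ↦ hG r (hac.trans hr)) hg_c hlim
  rw [← Ioc_union_Ioi_eq_Ioi hac, setIntegral_union Ioc_disjoint_Ioi_same measurableSet_Ioi
    (IntegrableOn.mono_set hg.abs Ioc_subset_Ioi_self) hg_c.abs, h_left, h_right]
  ring

noncomputable def gaussPrimitive (a b r : ℝ) : ℝ :=
  exp (-b * r ^ 2) * (-r ^ 2 / b + a / (2 * b) - 1 / b ^ 2)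

theorem hasDerivAt_gaussPrimitive (a : ℝ) {b : ℝ} (hb : b ≠ 0) (r : ℝ) :
    HasDerivAt (gaussPrimitive a b) (r * exp (-b * r ^ 2) * (2 * r ^ 2 - a)) r := by
  have h_sq : HasDerivAt (fun r : ℝ ↦ r ^ 2) (2 * r) r := by simpa using hasDerivAt_pow 2 r
  refine HasDerivAt.congr_deriv (f := gaussPrimitive a b) ((h_sq.const_mul (-b)).exp.mul
    (((h_sq.neg.div_const b).add_const (a / (2 * b))).sub_const (1 / b ^ 2))) ?_
  field_simp
  ring

theorem tendsto_gaussPrimitive_atTop (a : ℝ) {b : ℝ} (hb : 0 < b) :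
    Tendsto (gaussPrimitive a b) atTop (𝓝 0) := by
  have h_exp : Tendsto (fun u ↦ -(1 / b ^ 2) * (u ^ 1 * exp (-u)) +
      (a / (2 * b) - 1 / b ^ 2) * exp (-u)) atTop (𝓝 0) := by
    simpa only [mul_zero, add_zero] using
      ((tendsto_pow_mul_exp_neg_atTop_nhds_zero 1).const_mul (-(1 / b ^ 2))).add
        (tendsto_exp_neg_atTop_nhds_zero.const_mul (a / (2 * b) - 1 / b ^ 2))
  convert h_exp.comp ((tendsto_pow_atTop two_ne_zero).const_mul_atTop hb) using 1
  funext r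
  simp only [gaussPrimitive, Function.comp_apply, neg_mul]
  field_simp
  ring

theorem integrable_mul_exp_neg_mul_sq_mul {b : ℝ} (hb : 0 < b) (a : ℝ) :
    Integrable fun r : ℝ ↦ r * exp (-b * r ^ 2) * (2 * r ^ 2 - a) := by
  have h3 : Integrable fun r : ℝ ↦ r ^ 3 * exp (-b * r ^ 2) := by
    simpa using integrable_rpow_mul_exp_neg_mul_sq hb (s := 3) (by norm_num)
  refine ((h3.const_mul 2).sub ((integrable_mul_exp_neg_mul_sq hb).const_mul a)).congr
    (ae_of_all _ fun r ↦ ?_)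
  simp only [Pi.sub_apply]
  ring

theorem integral_Ioi_mul_exp_neg_mul_sq_mul_abs {a b : ℝ} (ha : 0 ≤ a) (hb : 0 < b) :
    ∫ r in Ioi (0 : ℝ), r * (exp (-b * r ^ 2) * |2 * r ^ 2 - a|) =
      a / (2 * b) - 1 / b ^ 2 + 2 / b ^ 2 * exp (-b * a / 2) := by
  have hc : √(a / 2) ^ 2 = a / 2 := sq_sqrt (by positivity)
  have h_abs : ∀ r ∈ Ioi (0 : ℝ),
      r * (exp (-b * r ^ 2) * |2 * r ^ 2 - a|) = |r * exp (-b * r ^ 2) * (2 * r ^ 2 - a)| := by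
    rintro r (hr : 0 < r)
    rw [abs_mul, abs_mul, abs_of_pos hr, abs_of_pos (exp_pos _), mul_assoc]
  rw [setIntegral_congr_fun measurableSet_Ioi h_abs,
    integral_Ioi_abs_of_hasDerivAt_of_sign_change (sqrt_nonneg _)
      (fun r _ ↦ hasDerivAt_gaussPrimitive a hb.ne' r)
      (integrable_mul_exp_neg_mul_sq_mul hb a).integrableOn ?neg ?pos
      (tendsto_gaussPrimitive_atTop a hb)]
  case neg =>
    rintro r ⟨hr, hrc⟩
    have : r ^ 2 ≤ a / 2 := (le_sqrt hr.le (by positivity)).mp hrc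
    exact mul_nonpos_of_nonneg_of_nonpos (by positivity) (by linarith)
  case pos =>
    intro r hr
    have : a / 2 < r ^ 2 := (sqrt_lt' ((sqrt_nonneg _).trans_lt hr)).mp hr
    exact mul_nonneg (mul_nonneg ((sqrt_nonneg _).trans hr.le) (exp_pos _).le) (by linarith)
  simp only [gaussPrimitive, hc, zero_pow two_ne_zero, mul_zero, exp_zero]
  field_simp
  ring

theorem total_abs_integral (x : ℝ) :
    (2 / π) * ∫ ξ : ℂ, Real.exp (-π * ‖ξ‖ ^ 2) * |2 * ‖ξ‖ ^ 2 - x ^ 2| =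
      (2 / π) * x ^ 2 - 4 / π ^ 2 + (8 / π ^ 2) * Real.exp (-π * x ^ 2 / 2) := by
  rw [Complex.integral_fun_norm (fun r ↦ exp (-π * r ^ 2) * |2 * r ^ 2 - x ^ 2|)]
  simp only [smul_eq_mul]
  rw [integral_Ioi_mul_exp_neg_mul_sq_mul_abs (sq_nonneg x) pi_pos]
  field_simp
  ring
end

section
/- For every real number x and every real constant χ, -(χπ²x/4)·e^{-πx²}·∫_ℂ e^{-π|ξ|²/2}·(π|ξ|² - 2)·||ξ|² - x²| dA(ξ) = χ·x·e^{-πx²}·(2π - (2π²x² + 4π)e^{-πx²/2}). In particular, the second order term F_∞ of the expected density of critical values on a Riemann surface with Euler characteristic χ admits the closed form F_∞(x) = χ x e^{-πx²}(2π - (2π²x² + 4π)e^{-πx²/2}). -/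
/-!
The integrand is radial, so polar coordinates and the substitution `t = |ξ|²` turn the integral
over `ℂ` into `π ∫₀^∞ e^{-πt/2} (πt - 2) |t - x²| dt`. Without the absolute value the integrand
`e^{-πt/2} (πt - 2) (t - x²)` has the elementary primitive
`G(t) = -(2t(t - x²) + 4t/π + 8/π²) e^{-πt/2}`, which vanishes at infinity; splitting at `t = x²`
gives the value `G(0) - 2 G(x²)`.
-/

open MeasureTheory Real Set Filter Topology

theorem integral_comp_norm_sq_complex {F : Type*} [NormedAddCommGroup F] [NormedSpace ℝ F]
    (g : ℝ → F) : ∫ ξ : ℂ, g (‖ξ‖ ^ 2) = π • ∫ t in Ioi 0, g t := by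
  have hball : volume.real (Metric.ball (0 : ℂ) 1) = π := by simp [measureReal_def]
  rw [integral_fun_norm_addHaar volume (fun r => g (r ^ 2)), Complex.finrank_real_complex, hball,
    ← integral_comp_rpow_Ioi_of_pos (g := g) two_pos, ← Nat.cast_smul_eq_nsmul ℝ,
    ← integral_smul, ← integral_smul, ← integral_smul]
  refine setIntegral_congr_fun measurableSet_Ioi fun r _ => ?_
  norm_num [smul_smul, rpow_two]
  ring_nf

theorem tendsto_pow_mul_exp_neg_mul_atTop_nhds_zero (n : ℕ) {b : ℝ} (hb : 0 < b) :
    Tendsto (fun t : ℝ => t ^ n * exp (-b * t)) atTop (𝓝 0) := by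
  simpa only [rpow_natCast] using tendsto_rpow_mul_exp_neg_mul_atTop_nhds_zero n b hb

theorem integrableOn_Ioi_pow_mul_exp_neg_mul (n : ℕ) {b : ℝ} (hb : 0 < b) :
    IntegrableOn (fun t : ℝ => t ^ n * exp (-b * t)) (Ioi 0) := by
  simpa only [rpow_one, rpow_natCast] using integrableOn_rpow_mul_exp_neg_mul_rpow (s := n)
    (p := 1) (by linarith [(n.cast_nonneg : (0 : ℝ) ≤ n)]) one_pos hb

theorem integral_Ioi_mul_abs_sub {k G : ℝ → ℝ} {a : ℝ} (ha : 0 ≤ a)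
    (hG : ∀ t, HasDerivAt G (k t * (t - a)) t) (hG_top : Tendsto G atTop (𝓝 0))
    (hint : IntegrableOn (fun t => k t * |t - a|) (Ioi 0)) :
    ∫ t in Ioi 0, k t * |t - a| = G 0 - 2 * G a := by
  have hhead : ∫ t in Ioc 0 a, k t * |t - a| = G 0 - G a := by
    have heq : EqOn (fun t => k t * |t - a|) (fun t => -(k t * (t - a))) (Ioc 0 a) :=
      fun t ht => by simp only [abs_of_nonpos (sub_nonpos.2 ht.2)]; ring
    rw [setIntegral_congr_fun measurableSet_Ioc heq, ← intervalIntegral.integral_of_le ha,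
      intervalIntegral.integral_eq_sub_of_hasDerivAt (fun t _ => (hG t).neg)
        ((intervalIntegrable_iff_integrableOn_Ioc_of_le ha).2
          ((hint.mono_set Ioc_subset_Ioi_self).congr_fun heq measurableSet_Ioc)),
      Pi.neg_apply, Pi.neg_apply]
    ring
  have htail : ∫ t in Ioi a, k t * |t - a| = -G a := by
    have heq : EqOn (fun t => k t * |t - a|) (fun t => k t * (t - a)) (Ioi a) :=
      fun t ht => by simp only [abs_of_pos (sub_pos.2 (mem_Ioi.1 ht))]
    rw [setIntegral_congr_fun measurableSet_Ioi heq, integral_Ioi_of_hasDerivAt_of_tendsto'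
      (fun t _ => hG t) ((hint.mono_set (Ioi_subset_Ioi ha)).congr_fun heq measurableSet_Ioi)
      hG_top, zero_sub]
  rw [← Ioc_union_Ioi_eq_Ioi ha, setIntegral_union (Ioc_disjoint_Ioi le_rfl) measurableSet_Ioi
    (hint.mono_set Ioc_subset_Ioi_self) (hint.mono_set (Ioi_subset_Ioi ha)), hhead, htail]
  ring

noncomputable def secondOrderPrimitive (a t : ℝ) : ℝ :=
  -(2 * t * (t - a) + 4 * t / π + 8 / π ^ 2) * exp (-π * t / 2)

theorem hasDerivAt_secondOrderPrimitive (a t : ℝ) :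
    HasDerivAt (secondOrderPrimitive a) (exp (-π * t / 2) * (π * t - 2) * (t - a)) t := by
  have hexp : HasDerivAt (fun t => exp (-π * t / 2)) (exp (-π * t / 2) * (-π * 1 / 2)) t :=
    (((hasDerivAt_id' t).const_mul (-π)).div_const 2).exp
  have hpoly := ((((hasDerivAt_id' t).const_mul 2).mul ((hasDerivAt_id' t).sub_const a)).add
    (((hasDerivAt_id' t).const_mul 4).div_const π)).add_const (8 / π ^ 2) |>.neg
  refine (hpoly.mul hexp).congr_deriv ?_
  simp only [Pi.neg_apply, Pi.add_apply, Pi.mul_apply]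
  field_simp
  ring

theorem tendsto_secondOrderPrimitive_atTop (a : ℝ) :
    Tendsto (secondOrderPrimitive a) atTop (𝓝 0) := by
  have hdecay (n : ℕ) := tendsto_pow_mul_exp_neg_mul_atTop_nhds_zero n (b := π / 2) (by positivity)
  have hlim := (((hdecay 2).const_mul (-2)).add ((hdecay 1).const_mul (2 * a - 4 / π))).add
    ((hdecay 0).const_mul (-(8 / π ^ 2)))
  simp only [mul_zero, add_zero] at hlim
  refine hlim.congr fun t => ?_
  simp only [secondOrderPrimitive]
  ring_nf

theorem integrableOn_Ioi_exp_mul_abs_sub {a : ℝ} (ha : 0 ≤ a) :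
    IntegrableOn (fun t => exp (-π * t / 2) * (π * t - 2) * |t - a|) (Ioi 0) := by
  have hdecay (n : ℕ) := integrableOn_Ioi_pow_mul_exp_neg_mul n (b := π / 2) (by positivity)
  have hbound := (((hdecay 2).const_mul π).add ((hdecay 1).const_mul (π * a + 2))).add
    ((hdecay 0).const_mul (2 * a))
  refine hbound.mono' (by fun_prop) ?_
  filter_upwards [ae_restrict_mem measurableSet_Ioi] with t (ht : 0 < t)
  have h1 : |π * t - 2| ≤ π * t + 2 := abs_le.2 ⟨by nlinarith [pi_pos], by linarith⟩
  have h2 : |t - a| ≤ t + a := abs_le.2 ⟨by linarith, by linarith⟩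
  calc ‖exp (-π * t / 2) * (π * t - 2) * |t - a|‖
      = exp (-π * t / 2) * |π * t - 2| * |t - a| := by
        rw [norm_mul, norm_mul, Real.norm_of_nonneg (exp_pos _).le, Real.norm_eq_abs,
          Real.norm_eq_abs, abs_abs]
    _ ≤ exp (-π * t / 2) * (π * t + 2) * (t + a) := by gcongr
    _ = _ := by simp only [Pi.add_apply]; ring_nf

theorem second_order_term_closed_form (x χ : ℝ) :
    -(χ * π ^ 2 * x / 4) * Real.exp (-π * x ^ 2) *
        ∫ ξ : ℂ, Real.exp (-π * ‖ξ‖ ^ 2 / 2) * (π * ‖ξ‖ ^ 2 - 2) *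
          |‖ξ‖ ^ 2 - x ^ 2| =
      χ * x * Real.exp (-π * x ^ 2) *
        (2 * π - (2 * π ^ 2 * x ^ 2 + 4 * π) * Real.exp (-π * x ^ 2 / 2)) := by
  have hintegral : ∫ ξ : ℂ, exp (-π * ‖ξ‖ ^ 2 / 2) * (π * ‖ξ‖ ^ 2 - 2) * |‖ξ‖ ^ 2 - x ^ 2|
      = π * (secondOrderPrimitive (x ^ 2) 0 - 2 * secondOrderPrimitive (x ^ 2) (x ^ 2)) := by
    rw [integral_comp_norm_sq_complex (fun t => exp (-π * t / 2) * (π * t - 2) * |t - x ^ 2|),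
      integral_Ioi_mul_abs_sub (sq_nonneg x) (hasDerivAt_secondOrderPrimitive _)
        (tendsto_secondOrderPrimitive_atTop _) (integrableOn_Ioi_exp_mul_abs_sub (sq_nonneg x)),
      smul_eq_mul]
  simp only [hintegral, secondOrderPrimitive, mul_zero, zero_div, exp_zero]
  field_simp
  ring
end
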